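/- arXiv:1404.4148 — 3 statements merged into one kernel-verified Lean document; each statement's English description precedes it below -/
import Mathlib

section
/- Let ℋ be the Hilbert space of square-integrable functions x : [0,T] → ℝ^d with inner product ⟨x,y⟩ = x(T)*Q̄y(T) + ∫₀ᵀ x(s)*Q y(s) ds, where Q and Q̄ are symmetric positive definite. Suppose a map Φ : ℋ → ℋ satisfies ‖Φ(x) − Φ(y)‖² ≤ N(S)‖Φ(x)−Φ(y)‖·‖x−y‖ + √T‖φ‖_T (‖Φ(x)−Φ(y)‖ + N(S)‖x−y‖)‖ℬQ^{-1/2}‖·‖x−y‖ for all x,y ∈ ℋ, with constants N(S), ‖φ‖_T, ‖ℬQ^{-1/2}‖ ≥ 0. If (1 + √T‖φ‖_T‖ℬQ^{-1/2}‖)(1 + N(S)) < 2, then Φ is a strict contraction on ℋ and hence has a unique fixed point. -/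
/-!
Writing `a = ‖Φ x - Φ y‖`, `b = ‖x - y‖` and `c = √T‖φ‖_T‖ℬQ^{-1/2}‖`, the hypothesis reads
`a² ≤ (N + c) a b + c N b²`. The quadratic `t² - (N + c) t - c N` factors as `(t - L)(t + L - N - c)`
with `L` its larger root, so `a ≤ L b`; and `L < 1` because the quadratic is positive at `1`, which
is exactly `(1 + c)(1 + N) < 2`. Banach's fixed point theorem finishes the argument.
-/

open Real

noncomputable def largerRoot (p q : ℝ) : ℝ := (p + √(p ^ 2 + 4 * q)) / 2

lemma largerRoot_sq {p q : ℝ} (hpq : 0 ≤ p ^ 2 + 4 * q) :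
    largerRoot p q ^ 2 = p * largerRoot p q + q := by
  have hsqrt := sq_sqrt hpq
  unfold largerRoot
  linear_combination hsqrt / 4

lemma le_two_mul_largerRoot (p q : ℝ) : p ≤ 2 * largerRoot p q := by
  unfold largerRoot
  linarith [sqrt_nonneg (p ^ 2 + 4 * q)]

lemma largerRoot_nonneg {p : ℝ} (hp : 0 ≤ p) (q : ℝ) : 0 ≤ largerRoot p q := by
  unfold largerRoot
  positivity

lemma largerRoot_lt_one {p q : ℝ} (hp : p < 2) (hpq : p + q < 1) : largerRoot p q < 1 := by
  have hsqrt : √(p ^ 2 + 4 * q) < 2 - p := (sqrt_lt' (by linarith)).2 (by nlinarith)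
  unfold largerRoot
  linarith

lemma le_mul_of_sq_le_of_root {a b p q L : ℝ} (hb : 0 ≤ b) (hL : L ^ 2 = p * L + q)
    (hpL : p ≤ 2 * L) (h : a ^ 2 ≤ p * a * b + q * b ^ 2) : a ≤ L * b := by
  by_contra! hlt
  have hfactor : a ^ 2 - p * a * b - q * b ^ 2 = (a - L * b) * (a + (L - p) * b) := by
    linear_combination b ^ 2 * hL
  have hpos : 0 < (a - L * b) * (a + (L - p) * b) :=
    mul_pos (by linarith) (by nlinarith)
  linarith

lemma existsUnique_fixedPt_of_dist_le_mul {α : Type*} [MetricSpace α] [CompleteSpace α]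
    [Nonempty α] {f : α → α} {L : ℝ} (hL0 : 0 ≤ L) (hL1 : L < 1)
    (hf : ∀ x y, dist (f x) (f y) ≤ L * dist x y) : ∃! z, f z = z := by
  have hK : ContractingWith ⟨L, hL0⟩ f := ⟨hL1, LipschitzWith.of_dist_le_mul hf⟩
  exact ⟨ContractingWith.fixedPoint f hK, ContractingWith.fixedPoint_isFixedPt (hf := hK),
    fun _ hz => ContractingWith.fixedPoint_unique (hf := hK) hz⟩

theorem stmt7_general {H : Type*} [NormedAddCommGroup H]
    [CompleteSpace H]
    (Φ : H → H) (NS phiT BQ T : ℝ)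
    (hNS : 0 ≤ NS) (hphiT : 0 ≤ phiT) (hBQ : 0 ≤ BQ)
    (h : ∀ x y : H, ‖Φ x - Φ y‖ ^ 2 ≤ NS * ‖Φ x - Φ y‖ * ‖x - y‖
        + Real.sqrt T * phiT * (‖Φ x - Φ y‖ + NS * ‖x - y‖) * BQ * ‖x - y‖)
    (hcond : (1 + Real.sqrt T * phiT * BQ) * (1 + NS) < 2) :
    (∃ L : ℝ, 0 ≤ L ∧ L < 1 ∧ ∀ x y : H, ‖Φ x - Φ y‖ ≤ L * ‖x - y‖) ∧
      ∃! z : H, Φ z = z := by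
  set c := √T * phiT * BQ
  have hc : 0 ≤ c := by positivity
  set L := largerRoot (NS + c) (c * NS)
  have hL0 : 0 ≤ L := largerRoot_nonneg (by positivity) _
  have hL1 : L < 1 := largerRoot_lt_one (by nlinarith) (by linarith)
  have hLip : ∀ x y : H, ‖Φ x - Φ y‖ ≤ L * ‖x - y‖ := fun x y =>
    le_mul_of_sq_le_of_root (norm_nonneg _) (largerRoot_sq (by positivity))
      (le_two_mul_largerRoot _ _) ((h x y).trans_eq (by ring))
  refine ⟨⟨L, hL0, hL1, hLip⟩, existsUnique_fixedPt_of_dist_le_mul hL0 hL1 ?_⟩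
  simpa only [dist_eq_norm] using hLip

/-- Abstract fixed point step of Section 4: if `Φ : ℋ → ℋ` on a (nonempty, complete)
Hilbert space satisfies
`‖Φx − Φy‖² ≤ N(S)‖Φx−Φy‖‖x−y‖ + √T‖φ‖_T(‖Φx−Φy‖ + N(S)‖x−y‖)‖ℬQ^{-1/2}‖‖x−y‖`
and `(1 + √T‖φ‖_T‖ℬQ^{-1/2}‖)(1 + N(S)) < 2`, then `Φ` is a strict contraction and
has a unique fixed point. -/
theorem stmt7 {H : Type*} [NormedAddCommGroup H] [InnerProductSpace ℝ H]
    [CompleteSpace H] [Nonempty H]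
    (Φ : H → H) (NS phiT BQ T : ℝ)
    (hNS : 0 ≤ NS) (hphiT : 0 ≤ phiT) (hBQ : 0 ≤ BQ) (hT : 0 ≤ T)
    (h : ∀ x y : H, ‖Φ x - Φ y‖ ^ 2 ≤ NS * ‖Φ x - Φ y‖ * ‖x - y‖
        + Real.sqrt T * phiT * (‖Φ x - Φ y‖ + NS * ‖x - y‖) * BQ * ‖x - y‖)
    (hcond : (1 + Real.sqrt T * phiT * BQ) * (1 + NS) < 2) :
    (∃ L : ℝ, 0 ≤ L ∧ L < 1 ∧ ∀ x y : H, ‖Φ x - Φ y‖ ≤ L * ‖x - y‖) ∧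
      ∃! z : H, Φ z = z :=
  stmt7_general Φ NS phiT BQ T hNS hphiT hBQ h hcond
end

section
/- Let a, b ≥ 0 and N, c ≥ 0 satisfy a² ≤ N·a·b + c·(a + N·b)·b. If (1+c)(1+N) < 2 then a ≤ L·b for some constant L < 1 depending only on N and c, namely L = ((N+c) + √((N+c)² + 4cN))/2. -/
/-! `a² ≤ N a b + c (a + N b) b` says `a² ≤ p a b + q b²` with `p = N + c`, `q = c N`, so `a / b` lies
below the larger root `L` of `x² - p x - q`. Completing the square gives `a ≤ L b`, and `L < 1`
because the quadratic is positive at `1 > p / 2`: its value there is `1 - p - q = 2 - (1 + c)(1 + N)`. -/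

theorem le_mul_of_sq_le_mul_add_mul_sq {a b p q : ℝ} (hb : 0 ≤ b)
    (h : a ^ 2 ≤ p * a * b + q * b ^ 2) :
    a ≤ (p + √(p ^ 2 + 4 * q)) / 2 * b := by
  have hsq : (2 * a - p * b) ^ 2 ≤ (p ^ 2 + 4 * q) * b ^ 2 := by nlinarith
  have hroot : 2 * a - p * b ≤ √(p ^ 2 + 4 * q) * b := calc
    2 * a - p * b ≤ √((p ^ 2 + 4 * q) * b ^ 2) := Real.le_sqrt_of_sq_le hsq
    _ = √(p ^ 2 + 4 * q) * b := by rw [Real.sqrt_mul' _ (sq_nonneg b), Real.sqrt_sq hb]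
  linarith

theorem add_sqrt_sq_add_four_mul_div_two_lt_one {p q : ℝ} (hq : 0 ≤ q) (hpq : p + q < 1) :
    (p + √(p ^ 2 + 4 * q)) / 2 < 1 := by
  have hp : 0 < 2 - p := by linarith
  have hsqrt : √(p ^ 2 + 4 * q) < 2 - p := (Real.sqrt_lt' hp).2 (by nlinarith)
  linarith

theorem stmt8_general (a b N c : ℝ) (hb : 0 ≤ b) (hN : 0 ≤ N) (hc : 0 ≤ c)
    (h : a ^ 2 ≤ N * a * b + c * (a + N * b) * b)
    (hcond : (1 + c) * (1 + N) < 2) :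
    a ≤ ((N + c) + Real.sqrt ((N + c) ^ 2 + 4 * c * N)) / 2 * b ∧
      ((N + c) + Real.sqrt ((N + c) ^ 2 + 4 * c * N)) / 2 < 1 := by
  have hquad : a ^ 2 ≤ (N + c) * a * b + c * N * b ^ 2 := by linarith
  rw [mul_assoc 4 c N]
  exact ⟨le_mul_of_sq_le_mul_add_mul_sq hb hquad,
    add_sqrt_sq_add_four_mul_div_two_lt_one (mul_nonneg hc hN) (by linarith)⟩

/-- Algebraic core of the contraction estimate: if `a² ≤ Nab + c(a + Nb)b` with
`a, b, N, c ≥ 0` and `(1+c)(1+N) < 2`, then `a ≤ L b` with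
`L = ((N+c) + √((N+c)² + 4cN))/2 < 1`. -/
theorem stmt8 (a b N c : ℝ) (ha : 0 ≤ a) (hb : 0 ≤ b) (hN : 0 ≤ N) (hc : 0 ≤ c)
    (h : a ^ 2 ≤ N * a * b + c * (a + N * b) * b)
    (hcond : (1 + c) * (1 + N) < 2) :
    a ≤ ((N + c) + Real.sqrt ((N + c) ^ 2 + 4 * c * N)) / 2 * b ∧
      ((N + c) + Real.sqrt ((N + c) ^ 2 + 4 * c * N)) / 2 < 1 :=
  stmt8_general a b N c hb hN hc h hcond
end

section
/- Let X, Y, x : [0,T] → ℝ^d with X'(t) = 𝒜X(t) − 𝒞Y(t) + ℬx(t), X(0)=0, and −Y'(t) = 𝒜*Y(t) + 𝒬X(t) + 𝒮x(t), Y(T) = Q̄X(T) + S̄x(T). Then the duality identity holds: X(T)*Q̄X(T) + ∫₀ᵀ X(t)*𝒬X(t) dt = −X(T)*S̄x(T) − ∫₀ᵀ [Y(t)*𝒞Y(t) − Y(t)*ℬx(t) + X(t)*𝒮x(t)] dt. -/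
open Matrix intervalIntegral

theorem HasDerivAt.dotProduct {𝕜 ι : Type*} [NontriviallyNormedField 𝕜] [Fintype ι]
    {f g : 𝕜 → ι → 𝕜} {f' g' : ι → 𝕜} {t : 𝕜} (hf : HasDerivAt f f' t)
    (hg : HasDerivAt g g' t) :
    HasDerivAt (fun s => f s ⬝ᵥ g s) (f' ⬝ᵥ g t + f t ⬝ᵥ g') t := by
  have h := HasDerivAt.fun_sum (u := Finset.univ) fun i _ =>
    (hasDerivAt_pi.mp hf i).mul (hasDerivAt_pi.mp hg i)
  rw [Finset.sum_add_distrib] at h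
  exact h

-- The drift `A` of the forward equation cancels against the adjoint drift `Aᵀ` of the backward one.
theorem hasDerivAt_dotProduct_of_forwardBackward {𝕜 ι : Type*} [NontriviallyNormedField 𝕜]
    [Fintype ι] (A B C Q S : Matrix ι ι 𝕜) {X Y x : 𝕜 → ι → 𝕜} {t : 𝕜}
    (hX : HasDerivAt X (A *ᵥ X t - C *ᵥ Y t + B *ᵥ x t) t)
    (hY : HasDerivAt Y (-(Aᵀ *ᵥ Y t + Q *ᵥ X t + S *ᵥ x t)) t) :
    HasDerivAt (fun s => X s ⬝ᵥ Y s)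
      (-(Y t ⬝ᵥ (C *ᵥ Y t) - Y t ⬝ᵥ (B *ᵥ x t) + X t ⬝ᵥ (S *ᵥ x t))
        - X t ⬝ᵥ (Q *ᵥ X t)) t := by
  convert hX.dotProduct hY using 1
  rw [dotProduct_comm _ (Y t)]
  simp only [dotProduct_add, dotProduct_sub, dotProduct_neg, dotProduct_transpose_mulVec]
  ring

theorem stmt10_general {d : ℕ} (T : ℝ)
    (A B C Q S Qbar Sbar : Matrix (Fin d) (Fin d) ℝ)
    (X Y x : ℝ → Fin d → ℝ) (hx : Continuous x)
    (hX : ∀ t, HasDerivAt X (A *ᵥ X t - C *ᵥ Y t + B *ᵥ x t) t)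
    (hX0 : X 0 = 0)
    (hY : ∀ t, HasDerivAt Y (-(Aᵀ *ᵥ Y t + Q *ᵥ X t + S *ᵥ x t)) t)
    (hYT : Y T = Qbar *ᵥ X T + Sbar *ᵥ x T) :
    X T ⬝ᵥ (Qbar *ᵥ X T) + ∫ t in (0:ℝ)..T, X t ⬝ᵥ (Q *ᵥ X t)
      = -(X T ⬝ᵥ (Sbar *ᵥ x T))
        - ∫ t in (0:ℝ)..T,
            (Y t ⬝ᵥ (C *ᵥ Y t) - Y t ⬝ᵥ (B *ᵥ x t) + X t ⬝ᵥ (S *ᵥ x t)) := by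
  have hXc : Continuous X := continuous_iff_continuousAt.2 fun t => (hX t).continuousAt
  have hYc : Continuous Y := continuous_iff_continuousAt.2 fun t => (hY t).continuousAt
  have hFTC := integral_eq_sub_of_hasDerivAt
    (fun t _ => hasDerivAt_dotProduct_of_forwardBackward A B C Q S (hX t) (hY t))
    (Continuous.intervalIntegrable (by fun_prop) 0 T)
  rw [integral_sub (Continuous.intervalIntegrable (by fun_prop) 0 T)
    (Continuous.intervalIntegrable (by fun_prop) 0 T), integral_neg, hX0, hYT] at hFTC
  simp only [zero_dotProduct, dotProduct_add] at hFTC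
  linarith

/-- Duality identity for the linear forward-backward ODE system: if
`X' = 𝒜X − 𝒞Y + ℬx`, `X(0) = 0`, `−Y' = 𝒜*Y + 𝒬X + 𝒮x`, `Y(T) = Q̄X(T) + S̄x(T)`,
then `X(T)*Q̄X(T) + ∫₀ᵀ X*𝒬X = −X(T)*S̄x(T) − ∫₀ᵀ [Y*𝒞Y − Y*ℬx + X*𝒮x]`. -/
theorem stmt10 {d : ℕ} (T : ℝ) (hT : 0 ≤ T)
    (A B C Q S Qbar Sbar : Matrix (Fin d) (Fin d) ℝ)
    (X Y x : ℝ → Fin d → ℝ) (hx : Continuous x)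
    (hX : ∀ t, HasDerivAt X (A *ᵥ X t - C *ᵥ Y t + B *ᵥ x t) t)
    (hX0 : X 0 = 0)
    (hY : ∀ t, HasDerivAt Y (-(Aᵀ *ᵥ Y t + Q *ᵥ X t + S *ᵥ x t)) t)
    (hYT : Y T = Qbar *ᵥ X T + Sbar *ᵥ x T) :
    X T ⬝ᵥ (Qbar *ᵥ X T) + ∫ t in (0:ℝ)..T, X t ⬝ᵥ (Q *ᵥ X t)
      = -(X T ⬝ᵥ (Sbar *ᵥ x T))
        - ∫ t in (0:ℝ)..T,
            (Y t ⬝ᵥ (C *ᵥ Y t) - Y t ⬝ᵥ (B *ᵥ x t) + X t ⬝ᵥ (S *ᵥ x t)) :=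
  stmt10_general T A B C Q S Qbar Sbar X Y x hx hX hX0 hY hYT
end
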